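/- If n ≥ 2 and 2^n − 1 is prime, then the unique odd natural number m ≥ 3 whose multiplicative order of 2 modulo m equals n is m = 2^n − 1. -/
import Mathlib

lemma dvd_of_pow_eq_one (m k : ℕ) (hm : m ≠ 0) (h : (2 : ZMod m) ^ k = 1) :
    m ∣ 2 ^ k - 1 := by
  haveI : NeZero m := ⟨hm⟩
  have h1 : (1 : ℕ) ≤ 2 ^ k := Nat.one_le_two_pow
  have : ((2 ^ k - 1 : ℕ) : ZMod m) = 0 := by
    push_cast [h1]
    rw [h]; ring
  exact (ZMod.natCast_eq_zero_iff _ _).mp this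

theorem stmt_7 (n : ℕ) (hn : 2 ≤ n) (hp : Nat.Prime (2 ^ n - 1)) :
    (Odd (2 ^ n - 1) ∧ 3 ≤ 2 ^ n - 1 ∧ orderOf (2 : ZMod (2 ^ n - 1)) = n) ∧
    ∀ m : ℕ, Odd m → 3 ≤ m → orderOf (2 : ZMod m) = n → m = 2 ^ n - 1 := by
  set M := 2 ^ n - 1 with hM
  have h2n : 2 ^ 2 ≤ 2 ^ n := Nat.pow_le_pow_right (by norm_num) hn
  have hM3 : 3 ≤ M := by omega
  have hModd : Odd M := by
    have : 2 ∣ 2 ^ n := dvd_pow_self 2 (by omega)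
    rcases this with ⟨c, hc⟩
    exact ⟨c - 1, by omega⟩
  have hMne : M ≠ 0 := by omega
  haveI : NeZero M := ⟨hMne⟩
  -- 2^n = 1 in ZMod M
  have hpow : (2 : ZMod M) ^ n = 1 := by
    have : ((2 ^ n : ℕ) : ZMod M) = ((M + 1 : ℕ) : ZMod M) := by
      congr 1; omega
    rw [Nat.cast_add, ZMod.natCast_self, zero_add, Nat.cast_one] at this
    simpa using this
  have hdvd : orderOf (2 : ZMod M) ∣ n := orderOf_dvd_of_pow_eq_one hpow
  have hord : orderOf (2 : ZMod M) = n := by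
    set d := orderOf (2 : ZMod M) with hd
    have hdn : d ≠ 0 := by
      intro h0
      rw [h0] at hdvd
      omega
    have hMd : M ∣ 2 ^ d - 1 := dvd_of_pow_eq_one M d hMne (by rw [hd]; exact pow_orderOf_eq_one _)
    have hdle : d ≤ n := Nat.le_of_dvd (by omega) hdvd
    have h1d : (1 : ℕ) ≤ 2 ^ d := Nat.one_le_two_pow
    have hle : M ≤ 2 ^ d - 1 := Nat.le_of_dvd (by
      have : 2 ^ 1 ≤ 2 ^ d := Nat.pow_le_pow_right (by norm_num) (by omega)
      omega) hMd
    have : 2 ^ n ≤ 2 ^ d := by omega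
    have : n ≤ d := (Nat.pow_le_pow_iff_right (by norm_num)).mp this
    omega
  refine ⟨⟨hModd, hM3, hord⟩, ?_⟩
  intro m _ hm3 hordm
  have hmne : m ≠ 0 := by omega
  have hmdvd : m ∣ M := by
    have : (2 : ZMod m) ^ n = 1 := by rw [← hordm]; exact pow_orderOf_eq_one _
    exact dvd_of_pow_eq_one m n hmne this
  rcases (Nat.Prime.eq_one_or_self_of_dvd hp m hmdvd) with h | h
  · omega
  · exact h
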